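/- Corollary 3.1: Under Assumption (K) on the kernel k, for each λ∈ℂ there exists a unique function t↦Φ(t,−λ), bounded and Borel measurable on [0,T] for every T>0, satisfying the Volterra equation of the second kind Φ(t,−λ)=1−λ∫_0^t k(t,s)Φ(s,−λ)ds for all t>0 and Φ(0,−λ)=1. This solution is given by the series Φ(t,−λ)=∑_{n=0}^∞ c_n(t)(−λ)^n, which converges absolutely for every λ∈ℂ (so that Φ(t,·) is an entire function for each t≥0), and Φ(t,−λ)→1 as t↓0 uniformly in λ on every compact subset of ℂ. -/

import Mathlib

open MeasureTheory Filter

noncomputable section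

def AssumptionK (k : ℝ → ℝ → ℝ) : Prop :=
  Measurable (Function.uncurry k) ∧
  ∃ α ε : ℝ, 0 ≤ α ∧ α < 1 ∧ 0 < ε ∧
    ∀ T : ℝ, 0 < T → ∃ KT : ℝ,
      ∀ t : ℝ, 0 < t → t ≤ T →
        MeasureTheory.IntegrableOn (fun s => |k t s| ^ (1 + ε)) (Set.Ioc 0 t) ∧
        t ^ (α - 1 / (1 + ε)) *
          (∫ s in Set.Ioc (0:ℝ) t, |k t s| ^ (1 + ε)) ^ (1 / (1 + ε)) ≤ KT

noncomputable def Rop (k : ℝ → ℝ → ℝ) (lam : ℂ) (g : ℝ → ℂ) : ℝ → ℂ :=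
  fun t => if 0 < t then 1 - lam * ∫ s in Set.Ioc (0:ℝ) t, (k t s : ℂ) * g s else 1

def BddBorelOn (T : ℝ) (g : ℝ → ℂ) : Prop :=
  Measurable g ∧ ∃ M : ℝ, ∀ t ∈ Set.Icc (0:ℝ) T, ‖g t‖ ≤ M

noncomputable def coeff (k : ℝ → ℝ → ℝ) : ℕ → ℝ → ℝ
  | 0, _ => 1
  | n + 1, t => if 0 < t then ∫ s in Set.Ioc (0:ℝ) t, k t s * coeff k n s else 0

noncomputable def Phi (k : ℝ → ℝ → ℝ) (t : ℝ) (l : ℂ) : ℂ :=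
  ∑' n : ℕ, (coeff k n t : ℂ) * l ^ n

noncomputable def PhiR (k : ℝ → ℝ → ℝ) (t : ℝ) (x : ℝ) : ℝ :=
  ∑' n : ℕ, coeff k n t * x ^ n

/-!
Hölder's inequality with the exponent `p = 1 + ε` of Assumption (K) and its conjugate `q` turns a
bound `|φ s| ≤ A s^β` on `(0, t]` into
`∫₀ᵗ |k t s| |φ s| ds ≤ K A t^(β + 1 - α) / (β q + 1)^(1/q)`.
Iterating it gives `|c_n t| ≤ C_n t^(n(1-α))` with `C_(n+1) = K C_n / (n(1-α)q + 1)^(1/q)`.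
As `C_(n+1) / C_n → 0`, the series `∑ C_n r^n` converges for every `r`, so the series defining `Φ`
converges absolutely, uniformly for `t` and `z` in bounded sets; it may be integrated term by term,
which gives the Volterra equation, and `Φ(t, z) - 1 = O(t^(1-α))` uniformly for `‖z‖ ≤ R`.
The difference `d` of two bounded solutions solves `d = z ∫ k d`, and the same iteration gives
`|d t| ≤ M C_n (‖z‖ t^(1-α))^n → 0`.
-/

open Set Topology

namespace Volterra

section Holder

lemma memLp_ofReal_of_integrable_abs_rpow {X : Type*} [MeasurableSpace X] {μ : Measure X}
    {f : X → ℝ} {p : ℝ} (hp : 0 < p) (hf : AEStronglyMeasurable f μ)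
    (hint : Integrable (fun x => |f x| ^ p) μ) : MemLp f (ENNReal.ofReal p) μ := by
  rw [← integrable_norm_rpow_iff hf (by simpa using hp) ENNReal.ofReal_ne_top,
    ENNReal.toReal_ofReal hp.le]
  exact hint

variable {φ : ℝ → ℝ} {A β q t : ℝ}

lemma integrableOn_Ioc_rpow_majorant (ht : 0 < t) (hq : 0 < q) (hβ : 0 ≤ β) (hA : 0 ≤ A) :
    IntegrableOn (fun s => (A * s ^ β) ^ q) (Ioc 0 t) := by
  have h : IntegrableOn (fun s : ℝ => A ^ q * s ^ (β * q)) (Ioc 0 t) :=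
    ((intervalIntegrable_iff_integrableOn_Ioc_of_le ht.le).mp
      (intervalIntegral.intervalIntegrable_rpow' (by nlinarith))).const_mul _
  refine h.congr_fun (fun s hs => ?_) measurableSet_Ioc
  dsimp only
  rw [Real.mul_rpow hA (Real.rpow_nonneg hs.1.le β), Real.rpow_mul hs.1.le]

lemma memLp_of_abs_le_rpow (ht : 0 < t) (hq : 0 < q) (hβ : 0 ≤ β) (hA : 0 ≤ A)
    (hφm : AEStronglyMeasurable φ (volume.restrict (Ioc 0 t)))
    (hφ : ∀ s ∈ Ioc 0 t, |φ s| ≤ A * s ^ β) :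
    MemLp φ (ENNReal.ofReal q) (volume.restrict (Ioc 0 t)) := by
  refine memLp_ofReal_of_integrable_abs_rpow hq hφm
    ((integrableOn_Ioc_rpow_majorant ht hq hβ hA).mono'
      (hφm.norm.aemeasurable.pow_const q).aestronglyMeasurable ?_)
  filter_upwards [ae_restrict_mem measurableSet_Ioc] with s hs
  rw [Real.norm_eq_abs, abs_of_nonneg (by positivity)]
  exact Real.rpow_le_rpow (abs_nonneg _) (hφ s hs) hq.le

lemma setIntegral_abs_rpow_le (ht : 0 < t) (hq : 0 < q) (hβ : 0 ≤ β) (hA : 0 ≤ A)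
    (hφ : ∀ s ∈ Ioc 0 t, |φ s| ≤ A * s ^ β) :
    (∫ s in Ioc 0 t, |φ s| ^ q) ^ (1 / q) ≤ A * t ^ (β + 1 / q) / (β * q + 1) ^ (1 / q) := by
  have hβq : 0 < β * q + 1 := by positivity
  have hpow : ∫ s in Ioc 0 t, (A * s ^ β) ^ q = A ^ q * (t ^ (β * q + 1) / (β * q + 1)) := by
    rw [setIntegral_congr_fun measurableSet_Ioc (g := fun s => A ^ q * s ^ (β * q))
        (fun s hs => by
          dsimp only
          rw [Real.mul_rpow hA (Real.rpow_nonneg hs.1.le β), Real.rpow_mul hs.1.le]),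
      integral_const_mul, ← intervalIntegral.integral_of_le ht.le,
      integral_rpow (Or.inl (by nlinarith)), Real.zero_rpow hβq.ne', sub_zero]
  have hmono : ∫ s in Ioc 0 t, |φ s| ^ q ≤ ∫ s in Ioc 0 t, (A * s ^ β) ^ q :=
    integral_mono_of_nonneg (Eventually.of_forall fun s => by positivity)
      (integrableOn_Ioc_rpow_majorant ht hq hβ hA) <| by
        filter_upwards [ae_restrict_mem measurableSet_Ioc] with s hs
        exact Real.rpow_le_rpow (abs_nonneg _) (hφ s hs) hq.le
  calc (∫ s in Ioc 0 t, |φ s| ^ q) ^ (1 / q)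
      ≤ (A ^ q * (t ^ (β * q + 1) / (β * q + 1))) ^ (1 / q) := by
        rw [← hpow]
        exact Real.rpow_le_rpow (integral_nonneg fun s => by positivity) hmono (by positivity)
    _ = A * t ^ (β + 1 / q) / (β * q + 1) ^ (1 / q) := by
        rw [Real.mul_rpow (by positivity) (by positivity), Real.div_rpow (by positivity) hβq.le,
          ← Real.rpow_mul hA, mul_one_div_cancel hq.ne', Real.rpow_one, ← Real.rpow_mul ht.le,
          show (β * q + 1) * (1 / q) = β + 1 / q by field_simp, mul_div_assoc]

lemma setIntegral_abs_mul_le {κ : ℝ → ℝ} {p α K : ℝ} (hpq : p.HolderConjugate q) (ht : 0 < t)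
    (hA : 0 ≤ A) (hβ : 0 ≤ β) (hκm : AEStronglyMeasurable κ (volume.restrict (Ioc 0 t)))
    (hκ : IntegrableOn (fun s => |κ s| ^ p) (Ioc 0 t))
    (hK : t ^ (α - 1 / p) * (∫ s in Ioc 0 t, |κ s| ^ p) ^ (1 / p) ≤ K)
    (hφm : AEStronglyMeasurable φ (volume.restrict (Ioc 0 t)))
    (hφ : ∀ s ∈ Ioc 0 t, |φ s| ≤ A * s ^ β) :
    ∫ s in Ioc 0 t, |κ s| * |φ s| ≤ K * A * t ^ (β + (1 - α)) / (β * q + 1) ^ (1 / q) := by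
  have hK0 : 0 ≤ K := le_trans (by positivity) hK
  have hκLp : (∫ s in Ioc 0 t, |κ s| ^ p) ^ (1 / p) ≤ K * t ^ (1 / p - α) := by
    calc (∫ s in Ioc 0 t, |κ s| ^ p) ^ (1 / p)
        = t ^ (1 / p - α) * (t ^ (α - 1 / p) * (∫ s in Ioc 0 t, |κ s| ^ p) ^ (1 / p)) := by
          rw [← mul_assoc, ← Real.rpow_add ht, sub_add_sub_cancel', sub_self, Real.rpow_zero,
            one_mul]
      _ ≤ t ^ (1 / p - α) * K := by gcongr
      _ = K * t ^ (1 / p - α) := mul_comm _ _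
  calc ∫ s in Ioc 0 t, |κ s| * |φ s|
      ≤ (∫ s in Ioc 0 t, |κ s| ^ p) ^ (1 / p) * (∫ s in Ioc 0 t, |φ s| ^ q) ^ (1 / q) :=
        integral_mul_le_Lp_mul_Lq_of_nonneg hpq (Eventually.of_forall fun s => abs_nonneg _)
          (Eventually.of_forall fun s => abs_nonneg _)
          (memLp_ofReal_of_integrable_abs_rpow hpq.pos hκm hκ).norm
          (memLp_of_abs_le_rpow ht hpq.symm.pos hβ hA hφm hφ).norm
    _ ≤ K * t ^ (1 / p - α) * (A * t ^ (β + 1 / q) / (β * q + 1) ^ (1 / q)) :=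
        mul_le_mul hκLp (setIntegral_abs_rpow_le ht hpq.symm.pos hβ hA hφ) (by positivity)
          (by positivity)
    _ = K * A * t ^ (β + (1 - α)) / (β * q + 1) ^ (1 / q) := by
        rw [show β + (1 - α) = (1 / p - α) + (β + 1 / q) by
              linarith [hpq.inv_add_inv_eq_one, one_div p, one_div q],
          Real.rpow_add ht (1 / p - α)]
        ring

end Holder

def growthConst (K γ q : ℝ) : ℕ → ℝ
  | 0 => 1
  | n + 1 => K * growthConst K γ q n / ((n : ℝ) * γ * q + 1) ^ (1 / q)

section GrowthConst

variable {K γ q : ℝ}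

lemma growthConst_nonneg (hK : 0 ≤ K) (hγ : 0 ≤ γ) (hq : 0 ≤ q) :
    ∀ n, 0 ≤ growthConst K γ q n
  | 0 => zero_le_one
  | n + 1 => div_nonneg (mul_nonneg hK (growthConst_nonneg hK hγ hq n)) (by positivity)

lemma summable_growthConst_mul_pow (hγ : 0 < γ) (hq : 0 < q) (r : ℝ) :
    Summable fun n => growthConst K γ q n * r ^ n := by
  have hden : ∀ n : ℕ, 0 < ((n : ℝ) * γ * q + 1) ^ (1 / q) := fun n => by positivity
  have hratio : Tendsto (fun n : ℕ => |K * r| / ((n : ℝ) * γ * q + 1) ^ (1 / q)) atTop (𝓝 0) :=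
    tendsto_const_nhds.div_atTop <| (tendsto_rpow_atTop (by positivity)).comp <|
      tendsto_atTop_add_const_right _ _ <|
        ((tendsto_natCast_atTop_atTop).atTop_mul_const hγ).atTop_mul_const hq
  refine summable_of_ratio_norm_eventually_le (r := 1 / 2) (by norm_num) ?_
  filter_upwards [hratio.eventually (ge_mem_nhds (by norm_num : (0:ℝ) < 1 / 2))] with n hn
  calc ‖growthConst K γ q (n + 1) * r ^ (n + 1)‖
      = |K * r| / ((n : ℝ) * γ * q + 1) ^ (1 / q) * ‖growthConst K γ q n * r ^ n‖ := by
        simp only [growthConst, Real.norm_eq_abs, abs_mul, abs_div, abs_of_pos (hden n), abs_pow,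
          pow_succ]
        ring
    _ ≤ 1 / 2 * ‖growthConst K γ q n * r ^ n‖ := by gcongr

end GrowthConst

/-- Assumption (K) on `(0, T]`, with `p = 1 + ε` and `K = K_T`. -/
def KernelBound (k : ℝ → ℝ → ℝ) (α p T K : ℝ) : Prop :=
  ∀ t, 0 < t → t ≤ T → IntegrableOn (fun s => |k t s| ^ p) (Ioc 0 t) ∧
    t ^ (α - 1 / p) * (∫ s in Ioc 0 t, |k t s| ^ p) ^ (1 / p) ≤ K

section Kernel

variable {k : ℝ → ℝ → ℝ} {α p q T K t : ℝ}

lemma KernelBound.nonneg (hK : KernelBound k α p T K) (hT : 0 < T) : 0 ≤ K :=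
  le_trans (by positivity) (hK T hT le_rfl).2

lemma KernelBound.integrableOn (hK : KernelBound k α p T K) (hp : 1 ≤ p)
    (hkm : Measurable (k t)) (ht : 0 < t) (htT : t ≤ T) : IntegrableOn (k t) (Ioc 0 t) := by
  have h := integrable_norm_rpow_of_le hkm.aestronglyMeasurable zero_le_one (by linarith) hp
    (hK t ht htT).1
  simp only [Real.rpow_one] at h
  exact (integrable_norm_iff hkm.aestronglyMeasurable).mp h

lemma KernelBound.integrableOn_mul (hK : KernelBound k α p T K) (hp : 1 ≤ p)
    (hkm : Measurable (k t)) (ht : 0 < t) (htT : t ≤ T) {g : ℝ → ℂ}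
    (hg : AEStronglyMeasurable g (volume.restrict (Ioc 0 t))) {M : ℝ}
    (hgM : ∀ s ∈ Ioc 0 t, ‖g s‖ ≤ M) :
    IntegrableOn (fun s => (k t s : ℂ) * g s) (Ioc 0 t) :=
  (hK.integrableOn hp hkm ht htT).ofReal.mul_bdd hg <| by
    filter_upwards [ae_restrict_mem measurableSet_Ioc] with s hs
    exact hgM s hs

lemma abs_le_growthConst_mul_rpow (hpq : p.HolderConjugate q) (hα : α < 1)
    (hkm : ∀ t, Measurable (k t)) (hK : KernelBound k α p T K) {φ : ℕ → ℝ → ℝ}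
    (hφm : ∀ n, Measurable (φ n)) {M L : ℝ} (hM : 0 ≤ M) (hL : 0 ≤ L)
    (h0 : ∀ t ∈ Ioc 0 T, |φ 0 t| ≤ M)
    (hsucc : ∀ n, ∀ t ∈ Ioc 0 T, |φ (n + 1) t| ≤ L * ∫ s in Ioc 0 t, |k t s| * |φ n s|) :
    ∀ n, ∀ t ∈ Ioc 0 T,
      |φ n t| ≤ M * L ^ n * growthConst K (1 - α) q n * t ^ (n * (1 - α)) := by
  intro n
  induction n with
  | zero => simpa [growthConst] using h0
  | succ n ih =>
    intro t ht
    have hK0 : 0 ≤ K := hK.nonneg (ht.1.trans_le ht.2)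
    have hC := growthConst_nonneg hK0 (sub_nonneg.mpr hα.le) hpq.symm.nonneg n
    have hHolder := setIntegral_abs_mul_le hpq ht.1 (by positivity)
      (by positivity : (0:ℝ) ≤ n * (1 - α)) (hkm t).aestronglyMeasurable (hK t ht.1 ht.2).1
      (hK t ht.1 ht.2).2 (hφm n).aestronglyMeasurable
      (fun s hs => ih s ⟨hs.1, hs.2.trans ht.2⟩)
    calc |φ (n + 1) t| ≤ L * ∫ s in Ioc 0 t, |k t s| * |φ n s| := hsucc n t ht
      _ ≤ L * (K * (M * L ^ n * growthConst K (1 - α) q n) * t ^ (n * (1 - α) + (1 - α)) /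
            ((n * (1 - α)) * q + 1) ^ (1 / q)) := by gcongr
      _ = M * L ^ (n + 1) * growthConst K (1 - α) q (n + 1) * t ^ ((n + 1 : ℕ) * (1 - α)) := by
        rw [growthConst]
        push_cast
        rw [add_mul, one_mul]
        ring

lemma coeff_succ_eq_integral (n : ℕ) (t : ℝ) :
    coeff k (n + 1) t = ∫ s in Ioc 0 t, k t s * coeff k n s := by
  rw [coeff]
  split_ifs with ht
  · rfl
  · rw [Ioc_eq_empty ht, Measure.restrict_empty, integral_zero_measure]

lemma coeff_of_nonpos (ht : t ≤ 0) {n : ℕ} (hn : n ≠ 0) : coeff k n t = 0 := by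
  obtain ⟨m, rfl⟩ := Nat.exists_eq_succ_of_ne_zero hn
  rw [coeff, if_neg ht.not_gt]

lemma stronglyMeasurable_setIntegral_Ioc {E : Type*} [NormedAddCommGroup E] [NormedSpace ℝ E]
    {F : ℝ → ℝ → E} (hF : StronglyMeasurable (Function.uncurry F)) (a : ℝ) :
    StronglyMeasurable fun t => ∫ s in Ioc a t, F t s := by
  have hS : MeasurableSet {x : ℝ × ℝ | x.2 ∈ Ioc a x.1} :=
    (measurableSet_lt measurable_const measurable_snd).inter
      (measurableSet_le measurable_snd measurable_fst)
  convert ((hF.indicator hS).integral_prod_right' (ν := volume)) using 2 with t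
  rw [← integral_indicator measurableSet_Ioc]
  rfl

lemma measurable_coeff (hkm : Measurable (Function.uncurry k)) : ∀ n, Measurable (coeff k n)
  | 0 => measurable_const
  | n + 1 => by
    simp_rw [funext (coeff_succ_eq_integral (k := k) n)]
    exact (stronglyMeasurable_setIntegral_Ioc (F := fun t s => k t s * coeff k n s)
      (hkm.mul ((measurable_coeff hkm n).comp measurable_snd)).stronglyMeasurable 0).measurable

lemma abs_coeff_le (hpq : p.HolderConjugate q) (hα : α < 1)
    (hkm : Measurable (Function.uncurry k)) (hK : KernelBound k α p T K) (n : ℕ)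
    (ht : t ∈ Ioc 0 T) : |coeff k n t| ≤ growthConst K (1 - α) q n * t ^ (n * (1 - α)) := by
  simpa using abs_le_growthConst_mul_rpow hpq hα (fun _ => hkm.of_uncurry_left) hK
    (measurable_coeff hkm) zero_le_one zero_le_one (fun t _ => by simp [coeff])
    (fun n t _ => by
      rw [one_mul, coeff_succ_eq_integral]
      exact abs_integral_le_integral_abs.trans_eq (by simp only [abs_mul])) n t ht

end Kernel

section Series

variable {k : ℝ → ℝ → ℝ} {α p q T K t : ℝ}

lemma norm_coeff_mul_pow_le (hpq : p.HolderConjugate q) (hα : α < 1)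
    (hkm : Measurable (Function.uncurry k)) (hK : KernelBound k α p T K) (hT : 0 < T)
    (ht : t ≤ T) (z : ℂ) (n : ℕ) :
    ‖(coeff k n t : ℂ) * z ^ n‖ ≤ growthConst K (1 - α) q n * (T ^ (1 - α) * ‖z‖) ^ n := by
  have hC := growthConst_nonneg (hK.nonneg hT) (sub_nonneg.mpr hα.le) hpq.symm.nonneg n
  rw [norm_mul, norm_pow, Complex.norm_real, Real.norm_eq_abs, mul_pow, ← mul_assoc]
  gcongr
  rcases le_or_gt t 0 with ht0 | ht0
  · rcases n with _ | n
    · simp [coeff, growthConst]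
    · rw [coeff_of_nonpos ht0 n.succ_ne_zero, abs_zero]
      positivity
  · calc |coeff k n t| ≤ growthConst K (1 - α) q n * t ^ (n * (1 - α)) :=
          abs_coeff_le hpq hα hkm hK n ⟨ht0, ht⟩
      _ ≤ growthConst K (1 - α) q n * T ^ (n * (1 - α)) := by
          gcongr
      _ = growthConst K (1 - α) q n * (T ^ (1 - α)) ^ n := by
          rw [mul_comm (n : ℝ), Real.rpow_mul hT.le, Real.rpow_natCast]

lemma summable_norm_coeff_mul_pow (hpq : p.HolderConjugate q) (hα : α < 1)
    (hkm : Measurable (Function.uncurry k)) (hK : KernelBound k α p T K) (hT : 0 < T)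
    (ht : t ≤ T) (z : ℂ) : Summable fun n => ‖(coeff k n t : ℂ) * z ^ n‖ :=
  .of_nonneg_of_le (fun _ => norm_nonneg _) (norm_coeff_mul_pow_le hpq hα hkm hK hT ht z)
    (summable_growthConst_mul_pow (by linarith) hpq.symm.pos _)

lemma norm_Phi_le (hpq : p.HolderConjugate q) (hα : α < 1)
    (hkm : Measurable (Function.uncurry k)) (hK : KernelBound k α p T K) (hT : 0 < T)
    (ht : t ≤ T) (z : ℂ) :
    ‖Phi k t z‖ ≤ ∑' n, growthConst K (1 - α) q n * (T ^ (1 - α) * ‖z‖) ^ n :=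
  (norm_tsum_le_tsum_norm (summable_norm_coeff_mul_pow hpq hα hkm hK hT ht z)).trans <|
    Summable.tsum_le_tsum (norm_coeff_mul_pow_le hpq hα hkm hK hT ht z)
      (summable_norm_coeff_mul_pow hpq hα hkm hK hT ht z)
      (summable_growthConst_mul_pow (by linarith) hpq.symm.pos _)

lemma Phi_of_nonpos (ht : t ≤ 0) (z : ℂ) : Phi k t z = 1 := by
  rw [Phi, tsum_eq_single 0 fun n hn => by rw [coeff_of_nonpos ht hn]; simp]
  simp [coeff]

lemma measurable_Phi (hkm : Measurable (Function.uncurry k)) {z : ℂ}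
    (hsum : ∀ t, Summable fun n => (coeff k n t : ℂ) * z ^ n) :
    Measurable fun t => Phi k t z :=
  measurable_of_tendsto_metrizable
    (fun N => Finset.measurable_sum (Finset.range N) fun n _ =>
      (Complex.measurable_ofReal.comp (measurable_coeff hkm n)).mul_const _)
    (tendsto_pi_nhds.mpr fun t => (hsum t).hasSum.tendsto_sum_nat)

lemma Phi_eq_one_add_integral (hpq : p.HolderConjugate q) (hα : α < 1)
    (hkm : Measurable (Function.uncurry k)) (hK : KernelBound k α p t K) (ht : 0 < t) (z : ℂ) :
    Phi k t z = 1 + z * ∫ s in Ioc 0 t, (k t s : ℂ) * Phi k s z := by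
  have hsummable : Summable fun n => growthConst K (1 - α) q n * (t ^ (1 - α) * ‖z‖) ^ n :=
    summable_growthConst_mul_pow (by linarith) hpq.symm.pos _
  have hterm : HasSum (fun n => ∫ s in Ioc 0 t, (k t s : ℂ) * ((coeff k n s : ℂ) * z ^ n))
      (∫ s in Ioc 0 t, (k t s : ℂ) * Phi k s z) := by
    refine hasSum_integral_of_dominated_convergence
      (fun n s => |k t s| * (growthConst K (1 - α) q n * (t ^ (1 - α) * ‖z‖) ^ n))
      (fun n => ?_) (fun n => ?_) (Eventually.of_forall fun s => hsummable.mul_left |k t s|) ?_ ?_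
    · have hkt : Measurable (k t) := hkm.of_uncurry_left
      have hcn := measurable_coeff hkm n
      fun_prop
    · filter_upwards [ae_restrict_mem measurableSet_Ioc] with s hs
      rw [norm_mul, Complex.norm_real, Real.norm_eq_abs]
      gcongr
      exact norm_coeff_mul_pow_le hpq hα hkm hK ht hs.2 z n
    · simp_rw [tsum_mul_left]
      exact (hK.integrableOn hpq.lt.le hkm.of_uncurry_left ht le_rfl).abs.mul_const _
    · filter_upwards [ae_restrict_mem measurableSet_Ioc] with s hs
      exact ((summable_norm_coeff_mul_pow hpq hα hkm hK ht hs.2 z).of_norm.hasSum).mul_left _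
  have hcoeff (n : ℕ) : ∫ s in Ioc 0 t, (k t s : ℂ) * ((coeff k n s : ℂ) * z ^ n)
      = coeff k (n + 1) t * z ^ n := by
    simp_rw [← mul_assoc, ← Complex.ofReal_mul, integral_mul_const, integral_complex_ofReal,
      coeff_succ_eq_integral]
  rw [Phi, (summable_norm_coeff_mul_pow hpq hα hkm hK ht le_rfl z).of_norm.tsum_eq_zero_add,
    ← (hterm.mul_left z).tsum_eq]
  simp only [hcoeff, coeff, Complex.ofReal_one, pow_zero, mul_one, pow_succ]
  congr 1
  exact tsum_congr fun n => by ring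

end Series

section Uniqueness

variable {k : ℝ → ℝ → ℝ} {α p q T K t : ℝ} {z : ℂ}

lemma eq_zero_of_homogeneous (hpq : p.HolderConjugate q) (hα : α < 1)
    (hkm : Measurable (Function.uncurry k)) (hK : KernelBound k α p T K) {d : ℝ → ℂ}
    (hdm : Measurable d) {M : ℝ} (hM : ∀ t ∈ Ioc 0 T, ‖d t‖ ≤ M)
    (hd : ∀ t ∈ Ioc 0 T, d t = z * ∫ s in Ioc 0 t, (k t s : ℂ) * d s) (ht : t ∈ Ioc 0 T) :
    d t = 0 := by
  have hbound := abs_le_growthConst_mul_rpow hpq hα (fun _ => hkm.of_uncurry_left) hK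
    (φ := fun _ s => ‖d s‖) (fun _ => hdm.norm) ((norm_nonneg _).trans (hM t ht))
    (norm_nonneg z) (by simpa using hM) fun n s hs => by
      rw [abs_norm, hd s hs, norm_mul]
      gcongr
      refine (norm_integral_le_integral_norm _).trans_eq ?_
      simp only [norm_mul, Complex.norm_real, Real.norm_eq_abs, abs_norm]
  have hlim : Tendsto (fun n => M * (growthConst K (1 - α) q n * (‖z‖ * t ^ (1 - α)) ^ n))
      atTop (𝓝 0) := by
    simpa using ((summable_growthConst_mul_pow (by linarith) hpq.symm.pos
      _).tendsto_atTop_zero).const_mul M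
  refine norm_le_zero_iff.mp (ge_of_tendsto hlim (Eventually.of_forall fun n => ?_))
  calc ‖d t‖ = |‖d t‖| := (abs_norm _).symm
    _ ≤ M * ‖z‖ ^ n * growthConst K (1 - α) q n * t ^ (n * (1 - α)) := hbound n t ht
    _ = M * (growthConst K (1 - α) q n * (‖z‖ * t ^ (1 - α)) ^ n) := by
      rw [mul_comm (n : ℝ), Real.rpow_mul ht.1.le, Real.rpow_natCast]
      ring

lemma eqOn_of_volterra (hpq : p.HolderConjugate q) (hα : α < 1)
    (hkm : Measurable (Function.uncurry k)) (hK : KernelBound k α p T K) {g h : ℝ → ℂ}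
    (hgm : Measurable g) (hhm : Measurable h) {Mg Mh : ℝ} (hgM : ∀ t ∈ Ioc 0 T, ‖g t‖ ≤ Mg)
    (hhM : ∀ t ∈ Ioc 0 T, ‖h t‖ ≤ Mh)
    (hg : ∀ t ∈ Ioc 0 T, g t = 1 + z * ∫ s in Ioc 0 t, (k t s : ℂ) * g s)
    (hh : ∀ t ∈ Ioc 0 T, h t = 1 + z * ∫ s in Ioc 0 t, (k t s : ℂ) * h s) :
    EqOn g h (Ioc 0 T) := by
  intro t ht
  refine sub_eq_zero.mp (eq_zero_of_homogeneous hpq hα hkm hK (z := z) (d := g - h) (hgm.sub hhm)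
    (M := Mg + Mh) (fun s hs => (norm_sub_le _ _).trans (add_le_add (hgM s hs) (hhM s hs)))
    (fun s hs => ?_) ht)
  have hint {f : ℝ → ℂ} (hfm : Measurable f) {M : ℝ} (hfM : ∀ t ∈ Ioc 0 T, ‖f t‖ ≤ M) :=
    hK.integrableOn_mul hpq.lt.le hkm.of_uncurry_left hs.1 hs.2 hfm.aestronglyMeasurable
      fun u hu => hfM u ⟨hu.1, hu.2.trans hs.2⟩
  simp only [Pi.sub_apply, mul_sub]
  rw [hg s hs, hh s hs, integral_sub (hint hgm hgM) (hint hhm hhM), mul_sub]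
  ring

end Uniqueness

section UniformLimit

variable {k : ℝ → ℝ → ℝ} {α p q K t R : ℝ} {z : ℂ}

lemma norm_Phi_sub_one_le (hpq : p.HolderConjugate q) (hα : α < 1)
    (hkm : Measurable (Function.uncurry k)) (hK : KernelBound k α p 1 K) (ht : t ∈ Ioc 0 1)
    (hz : ‖z‖ ≤ R) :
    ‖Phi k t z - 1‖ ≤ t ^ (1 - α) * ∑' n, growthConst K (1 - α) q (n + 1) * R ^ (n + 1) := by
  have hs := summable_norm_coeff_mul_pow hpq hα hkm hK one_pos ht.2 z
  have hs' := (summable_nat_add_iff 1).mpr hs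
  have hC : Summable fun n => growthConst K (1 - α) q (n + 1) * R ^ (n + 1) :=
    (summable_nat_add_iff 1).mpr (summable_growthConst_mul_pow (by linarith) hpq.symm.pos R)
  have htγ0 : 0 ≤ t ^ (1 - α) := Real.rpow_nonneg ht.1.le _
  have htγ : t ^ (1 - α) ≤ 1 := Real.rpow_le_one ht.1.le ht.2 (by linarith)
  rw [Phi, hs.of_norm.tsum_eq_zero_add]
  simp only [coeff, Complex.ofReal_one, pow_zero, mul_one, add_sub_cancel_left]
  refine (norm_tsum_le_tsum_norm hs').trans ?_
  rw [← tsum_mul_left]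
  refine Summable.tsum_le_tsum (fun n => ?_) hs' (hC.mul_left _)
  have hCn : 0 ≤ growthConst K (1 - α) q (n + 1) :=
    growthConst_nonneg (hK.nonneg one_pos) (by linarith) hpq.symm.nonneg _
  have hcoeff : |coeff k (n + 1) t| ≤ growthConst K (1 - α) q (n + 1) * (t ^ (1 - α)) ^ (n + 1) :=
    (abs_coeff_le hpq hα hkm hK (n + 1) ht).trans_eq <| by
      rw [mul_comm ((n + 1 : ℕ) : ℝ), Real.rpow_mul ht.1.le, Real.rpow_natCast]
  rw [norm_mul, norm_pow, Complex.norm_real, Real.norm_eq_abs]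
  calc |coeff k (n + 1) t| * ‖z‖ ^ (n + 1)
      ≤ growthConst K (1 - α) q (n + 1) * (t ^ (1 - α)) ^ (n + 1) * R ^ (n + 1) :=
        mul_le_mul hcoeff (pow_le_pow_left₀ (norm_nonneg z) hz _) (by positivity)
          (mul_nonneg hCn (pow_nonneg htγ0 _))
    _ ≤ growthConst K (1 - α) q (n + 1) * t ^ (1 - α) * R ^ (n + 1) :=
        mul_le_mul_of_nonneg_right
          (mul_le_mul_of_nonneg_left (pow_le_of_le_one htγ0 htγ n.succ_ne_zero) hCn)
          (pow_nonneg ((norm_nonneg z).trans hz) _)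
    _ = t ^ (1 - α) * (growthConst K (1 - α) q (n + 1) * R ^ (n + 1)) := by ring

lemma tendstoUniformlyOn_Phi (hpq : p.HolderConjugate q) (hα : α < 1)
    (hkm : Measurable (Function.uncurry k)) (hK : KernelBound k α p 1 K) (R : ℝ) :
    TendstoUniformlyOn (fun t z => Phi k t z) (fun _ => 1) (𝓝[>] 0) (Metric.closedBall 0 R) := by
  set S := ∑' n, growthConst K (1 - α) q (n + 1) * R ^ (n + 1)
  have hlim : Tendsto (fun t : ℝ => t ^ (1 - α) * S) (𝓝[>] 0) (𝓝 0) := by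
    simpa [Real.zero_rpow (by linarith : 1 - α ≠ 0)] using
      ((Real.continuousAt_rpow_const 0 (1 - α) (Or.inr (by linarith))).tendsto.mono_left
        nhdsWithin_le_nhds).mul_const S
  rw [Metric.tendstoUniformlyOn_iff]
  intro δ hδ
  filter_upwards [hlim.eventually (gt_mem_nhds hδ), Ioc_mem_nhdsGT one_pos] with t htδ ht z hz
  rw [dist_comm, dist_eq_norm]
  exact (norm_Phi_sub_one_le hpq hα hkm hK ht (mem_closedBall_zero_iff.mp hz)).trans_lt htδ

end UniformLimit

end Volterra

open Volterra

theorem stmt4 (k : ℝ → ℝ → ℝ) (hk : AssumptionK k) (lam : ℂ) :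
    (∀ T : ℝ, 0 < T → BddBorelOn T (fun t => Phi k t (-lam))) ∧
    Phi k 0 (-lam) = 1 ∧
    (∀ t : ℝ, 0 < t →
      Phi k t (-lam) = 1 - lam * ∫ s in Set.Ioc (0:ℝ) t, (k t s : ℂ) * Phi k s (-lam)) ∧
    (∀ g : ℝ → ℂ, (∀ T : ℝ, 0 < T → BddBorelOn T g) → g 0 = 1 →
      (∀ t : ℝ, 0 < t → g t = 1 - lam * ∫ s in Set.Ioc (0:ℝ) t, (k t s : ℂ) * g s) →
      ∀ t : ℝ, 0 ≤ t → g t = Phi k t (-lam)) ∧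
    (∀ t : ℝ, 0 ≤ t → ∀ z : ℂ, Summable (fun n : ℕ => ‖(coeff k n t : ℂ) * z ^ n‖)) ∧
    (∀ R : ℝ, 0 < R →
      TendstoUniformlyOn (fun (t : ℝ) (z : ℂ) => Phi k t (-z)) (fun _ => 1)
        (nhdsWithin 0 (Set.Ioi 0)) (Metric.closedBall 0 R)) := by
  obtain ⟨hkm, α, ε, -, hα, hε, hK⟩ := hk
  have hpq : (1 + ε).HolderConjugate (Real.conjExponent (1 + ε)) := .conjExponent (by linarith)
  have hKT : ∀ T, 0 < T → ∃ K, KernelBound k α (1 + ε) T K := hK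
  have hsum (t : ℝ) (z : ℂ) : Summable fun n => ‖(coeff k n t : ℂ) * z ^ n‖ := by
    obtain ⟨K, hK⟩ := hKT (max t 1) (by positivity)
    exact summable_norm_coeff_mul_pow hpq hα hkm hK (by positivity) (le_max_left t 1) z
  have hmeas (z : ℂ) := measurable_Phi hkm fun t => (hsum t z).of_norm
  have hbdd (T : ℝ) (hT : 0 < T) (z : ℂ) : ∃ M, ∀ t ∈ Icc 0 T, ‖Phi k t z‖ ≤ M := by
    obtain ⟨K, hK⟩ := hKT T hT
    exact ⟨_, fun t ht => norm_Phi_le hpq hα hkm hK hT ht.2 z⟩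
  have hvolterra (t : ℝ) (ht : 0 < t) :
      Phi k t (-lam) = 1 - lam * ∫ s in Ioc 0 t, (k t s : ℂ) * Phi k s (-lam) := by
    obtain ⟨K, hK⟩ := hKT t ht
    rw [Phi_eq_one_add_integral hpq hα hkm hK ht, neg_mul, ← sub_eq_add_neg]
  refine ⟨fun T hT => ⟨hmeas _, hbdd T hT _⟩, Phi_of_nonpos le_rfl _, hvolterra, ?_,
    fun t _ => hsum t, fun R _ => ?_⟩
  · intro g hg hg0 hgeq t ht
    rcases ht.eq_or_lt with rfl | ht
    · rw [hg0, Phi_of_nonpos le_rfl]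
    obtain ⟨K, hK⟩ := hKT t ht
    obtain ⟨hgm, Mg, hMg⟩ := hg t ht
    obtain ⟨MΦ, hMΦ⟩ := hbdd t ht (-lam)
    refine eqOn_of_volterra hpq hα hkm hK (z := -lam) hgm (hmeas _)
      (fun s hs => hMg s (Ioc_subset_Icc_self hs)) (fun s hs => hMΦ s (Ioc_subset_Icc_self hs))
      (fun s hs => ?_) (fun s hs => ?_) ⟨ht, le_rfl⟩
    · rw [hgeq s hs.1, neg_mul, ← sub_eq_add_neg]
    · rw [hvolterra s hs.1, neg_mul, ← sub_eq_add_neg]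
  · obtain ⟨K, hK⟩ := hKT 1 one_pos
    have hball : Neg.neg ⁻¹' Metric.closedBall (0 : ℂ) R = Metric.closedBall 0 R := by
      ext z
      simp
    exact hball ▸ (tendstoUniformlyOn_Phi hpq hα hkm hK R).comp Neg.neg
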